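/- arXiv:1810.11704 — 9 statements merged into one kernel-verified Lean document; each statement's English description precedes it below -/
import Mathlib

section
/- Let v : Fin N → ℝ be a family of voter ideal points on the real line and let I be a subset of Fin N. Then I is EDP-allowed if and only if there exists a point t ∈ ℝ such that either (v i < t for all i ∈ I and v j > t for all j ∉ I) or (v i > t for all i ∈ I and v j < t for all j ∉ I). -/
/-!
Squaring, `|x - p| < |x - q|` becomes `0 < (p - q) * (2x - (p + q))`: a voter prefers `p` to `q`
exactly when it lies strictly on `p`'s side of the midpoint `(p + q) / 2`. So the midpoint of the
two outcomes separates a coalition from its complement, and conversely a separating point `t` is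
the midpoint of the outcomes `t ∓ 1`.
-/

/-- A coalition `I` is **EDP-allowed** (one dimension): there exist outcome points
`p, q ∈ ℝ` such that every voter in `I` is strictly closer to `p` and every voter
outside `I` is strictly closer to `q`. -/
def EDPAllowed1D {N : ℕ} (v : Fin N → ℝ) (I : Set (Fin N)) : Prop :=
  ∃ p q : ℝ, (∀ i ∈ I, |v i - p| < |v i - q|) ∧ (∀ j ∉ I, |v j - q| < |v j - p|)

section

variable {K : Type*} [Field K] [LinearOrder K] [IsStrictOrderedRing K] {x p q t : K}

theorem abs_sub_lt_abs_sub_iff_mul_pos :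
    |x - p| < |x - q| ↔ 0 < (p - q) * (2 * x - (p + q)) := by
  have hdiff : (x - q) ^ 2 - (x - p) ^ 2 = (p - q) * (2 * x - (p + q)) := by ring
  rw [← sq_lt_sq, ← sub_pos, hdiff]

theorem lt_add_div_two_of_abs_sub_lt_abs_sub (hpq : p ≤ q) (h : |x - p| < |x - q|) :
    x < (p + q) / 2 := by
  have := neg_of_mul_pos_right (abs_sub_lt_abs_sub_iff_mul_pos.1 h) (sub_nonpos.2 hpq)
  linarith

theorem add_div_two_lt_of_abs_sub_lt_abs_sub (hpq : p ≤ q) (h : |x - q| < |x - p|) :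
    (p + q) / 2 < x := by
  have := pos_of_mul_pos_right (abs_sub_lt_abs_sub_iff_mul_pos.1 h) (sub_nonneg.2 hpq)
  linarith

theorem abs_sub_sub_one_lt_abs_sub_add_one (h : x < t) : |x - (t - 1)| < |x - (t + 1)| :=
  abs_sub_lt_abs_sub_iff_mul_pos.2 (by nlinarith)

theorem abs_sub_add_one_lt_abs_sub_sub_one (h : t < x) : |x - (t + 1)| < |x - (t - 1)| :=
  abs_sub_lt_abs_sub_iff_mul_pos.2 (by nlinarith)

end

/-- A coalition is EDP-allowed on the real line iff it is separated from its complement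
by a point `t`. -/
theorem edp_allowed_iff_separated (N : ℕ) (v : Fin N → ℝ) (I : Set (Fin N)) :
    EDPAllowed1D v I ↔
      ∃ t : ℝ, ((∀ i ∈ I, v i < t) ∧ (∀ j ∉ I, v j > t)) ∨
        ((∀ i ∈ I, v i > t) ∧ (∀ j ∉ I, v j < t)) := by
  constructor
  · rintro ⟨p, q, hI, hIc⟩
    rcases le_total p q with hpq | hqp
    · exact ⟨(p + q) / 2, Or.inl
        ⟨fun i hi => lt_add_div_two_of_abs_sub_lt_abs_sub hpq (hI i hi),
          fun j hj => add_div_two_lt_of_abs_sub_lt_abs_sub hpq (hIc j hj)⟩⟩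
    · exact ⟨(q + p) / 2, Or.inr
        ⟨fun i hi => add_div_two_lt_of_abs_sub_lt_abs_sub hqp (hI i hi),
          fun j hj => lt_add_div_two_of_abs_sub_lt_abs_sub hqp (hIc j hj)⟩⟩
  · rintro ⟨t, ⟨hI, hIc⟩ | ⟨hI, hIc⟩⟩
    · exact ⟨t - 1, t + 1, fun i hi => abs_sub_sub_one_lt_abs_sub_add_one (hI i hi),
        fun j hj => abs_sub_add_one_lt_abs_sub_sub_one (hIc j hj)⟩
    · exact ⟨t + 1, t - 1, fun i hi => abs_sub_add_one_lt_abs_sub_sub_one (hI i hi),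
        fun j hj => abs_sub_sub_one_lt_abs_sub_add_one (hIc j hj)⟩
end

section
/- Let v : Fin N → ℝ be a family of voter ideal points on the real line and let I be a subset of Fin N. Then I is SOI-allowed if and only if there exists a point t ∈ ℝ such that either (v i < t for all i ∈ I and v j > t for all j ∉ I) or (v i > t for all i ∈ I and v j < t for all j ∉ I); in particular, the one-dimensional SOI-allowed coalitions are exactly the one-dimensional EDP-allowed coalitions. -/
/-- A coalition `I` is **SOI-allowed** (one dimension): there exist outcome locations
`p, q ∈ ℝ` and strengths (radii) `r, s ≥ 0` such that every voter ideal point lies in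
exactly one of the two closed intervals `[p - r, p + r]` and `[q - s, q + s]`, and `I`
is exactly the set of voters in the first interval. -/
def SOIAllowed1D {N : ℕ} (v : Fin N → ℝ) (I : Set (Fin N)) : Prop :=
  ∃ p q r s : ℝ, 0 ≤ r ∧ 0 ≤ s ∧
    (∀ i, Xor' (|v i - p| ≤ r) (|v i - q| ≤ s)) ∧
    I = {i | |v i - p| ≤ r}

/-!
Both kinds of allowed coalition amount to `I` and its complement lying on opposite sides of a
point `t`. For intervals centred at `p ≤ q`, a voter in the first interval but not the second
lies to the left of every voter in the second but not the first, and finitely many voters on the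
left can be separated from finitely many on the right. For EDP outcomes `p < q` the separating
point is the midpoint `(p + q) / 2`. Conversely, a separating point `t` yields the EDP outcomes
`t ∓ 1` and the SOI intervals `[t - 2R, t]` and `[t, t + 2R]` for `R` large.
-/

open Set

section LinearOrderedField

variable {𝕜 : Type*} [Field 𝕜] [LinearOrder 𝕜] [IsStrictOrderedRing 𝕜] {p q r s x y : 𝕜}

theorem abs_sub_lt_abs_sub_iff_lt_midpoint (hpq : p < q) :
    |x - p| < |x - q| ↔ x < (p + q) / 2 := by
  rcases abs_cases (x - p) with ⟨hp, _⟩ | ⟨hp, _⟩ <;>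
    rcases abs_cases (x - q) with ⟨hq, _⟩ | ⟨hq, _⟩ <;>
    rw [hp, hq] <;> constructor <;> intro <;> linarith

theorem abs_sub_lt_abs_sub_iff_midpoint_lt (hpq : p < q) :
    |x - q| < |x - p| ↔ (p + q) / 2 < x := by
  rcases abs_cases (x - p) with ⟨hp, _⟩ | ⟨hp, _⟩ <;>
    rcases abs_cases (x - q) with ⟨hq, _⟩ | ⟨hq, _⟩ <;>
    rw [hp, hq] <;> constructor <;> intro <;> linarith

theorem lt_of_abs_sub_le_of_lt_abs_sub (hpq : p ≤ q) (hxp : |x - p| ≤ r) (hxq : s < |x - q|)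
    (hyq : |y - q| ≤ s) (hyp : r < |y - p|) : x < y := by
  rw [abs_le] at hxp hyq
  rw [lt_abs] at hxq hyp
  by_contra! hyx
  rcases hxq with hxq | hxq <;> rcases hyp with hyp | hyp <;> linarith

end LinearOrderedField

theorem compl_setOf_of_xor {ι : Type*} {P Q : ι → Prop} (h : ∀ i, Xor (P i) (Q i)) :
    {i | P i}ᶜ = {i | Q i} :=
  ext fun i => xor_iff_not_iff'.1 (h i)

section Separation

variable {ι α : Type*} [LinearOrder α]

def SeparatedBelow (v : ι → α) (I : Set ι) (t : α) : Prop :=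
  (∀ i ∈ I, v i < t) ∧ ∀ j ∉ I, t < v j

theorem separatedBelow_compl_iff {v : ι → α} {I : Set ι} {t : α} :
    SeparatedBelow v Iᶜ t ↔ (∀ i ∈ I, t < v i) ∧ ∀ j ∉ I, v j < t := by
  simp only [SeparatedBelow, mem_compl_iff, not_not]
  exact and_comm

theorem exists_separatedBelow [Finite ι] [DenselyOrdered α] [NoMaxOrder α] [NoMinOrder α]
    [Nonempty α] {v : ι → α} {I : Set ι} (h : ∀ i ∈ I, ∀ j ∉ I, v i < v j) :
    ∃ t, SeparatedBelow v I t := by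
  obtain ⟨t, hI, hJ⟩ := (toFinite (v '' I)).exists_between' (toFinite (v '' Iᶜ)) <| by
    rintro _ ⟨i, hi, rfl⟩ _ ⟨j, hj, rfl⟩
    exact h i hi j hj
  exact ⟨t, fun i hi => hI _ (mem_image_of_mem v hi), fun j hj => hJ _ (mem_image_of_mem v hj)⟩

end Separation

variable {N : ℕ} {v : Fin N → ℝ} {I : Set (Fin N)}

theorem SOIAllowed1D.compl (h : SOIAllowed1D v I) : SOIAllowed1D v Iᶜ := by
  obtain ⟨p, q, r, s, hr, hs, hxor, rfl⟩ := h
  exact ⟨q, p, s, r, hs, hr, fun i => Or.symm (hxor i), compl_setOf_of_xor hxor⟩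

theorem exists_separatedBelow_of_xor {p q r s : ℝ} (hpq : p ≤ q)
    (hxor : ∀ i, Xor (|v i - p| ≤ r) (|v i - q| ≤ s)) :
    ∃ t, SeparatedBelow v {i | |v i - p| ≤ r} t := by
  refine exists_separatedBelow fun i hi j hj => ?_
  have hiq : ¬|v i - q| ≤ s := (xor_iff_iff_not.1 (hxor i)).1 hi
  have hjq : |v j - q| ≤ s := (xor_iff_not_iff'.1 (hxor j)).1 hj
  exact lt_of_abs_sub_le_of_lt_abs_sub hpq hi (not_le.1 hiq) hjq (not_le.1 hj)

theorem SOIAllowed1D.exists_separatedBelow (h : SOIAllowed1D v I) :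
    ∃ t, SeparatedBelow v I t ∨ SeparatedBelow v Iᶜ t := by
  obtain ⟨p, q, r, s, -, -, hxor, rfl⟩ := h
  rcases le_total p q with hpq | hqp
  · exact (exists_separatedBelow_of_xor hpq hxor).imp fun _ => Or.inl
  · rw [compl_setOf_of_xor hxor]
    exact (exists_separatedBelow_of_xor hqp fun i => Or.symm (hxor i)).imp fun _ => Or.inr

theorem SeparatedBelow.soiAllowed1D {t : ℝ} (h : SeparatedBelow v I t) : SOIAllowed1D v I := by
  set R := ∑ i, |v i - t|
  have hR : ∀ i, |v i - t| ≤ R := fun i =>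
    Finset.single_le_sum (fun j _ => abs_nonneg (v j - t)) (Finset.mem_univ i)
  have hR0 : 0 ≤ R := Finset.sum_nonneg fun i _ => abs_nonneg _
  have hmem : ∀ i, (|v i - (t - R)| ≤ R ↔ i ∈ I) ∧ (|v i - (t + R)| ≤ R ↔ i ∉ I) := by
    intro i
    have := abs_le.1 (hR i)
    by_cases hi : i ∈ I
    · have := h.1 i hi
      grind [abs_le]
    · have := h.2 i hi
      grind [abs_le]
  refine ⟨t - R, t + R, R, R, hR0, hR0, fun i => ?_, ext fun i => (hmem i).1.symm⟩
  exact xor_iff_not_iff'.2 ((not_congr (hmem i).1).trans (hmem i).2.symm)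

theorem SOIAllowed1D.of_compl (h : SOIAllowed1D v Iᶜ) : SOIAllowed1D v I :=
  compl_compl I ▸ h.compl

theorem EDPAllowed1D.compl (h : EDPAllowed1D v I) : EDPAllowed1D v Iᶜ :=
  let ⟨p, q, hI, hJ⟩ := h
  ⟨q, p, hJ, fun i hi => hI i (not_not.1 hi)⟩

theorem EDPAllowed1D.of_compl (h : EDPAllowed1D v Iᶜ) : EDPAllowed1D v I :=
  compl_compl I ▸ h.compl

theorem SeparatedBelow.edpAllowed1D {t : ℝ} (h : SeparatedBelow v I t) : EDPAllowed1D v I := by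
  have ht : t - 1 < t + 1 := by linarith
  refine ⟨t - 1, t + 1, fun i hi => ?_, fun j hj => ?_⟩
  · exact (abs_sub_lt_abs_sub_iff_lt_midpoint ht).2 (by linarith [h.1 i hi])
  · exact (abs_sub_lt_abs_sub_iff_midpoint_lt ht).2 (by linarith [h.2 j hj])

theorem separatedBelow_midpoint {p q : ℝ} (hpq : p < q) (hI : ∀ i ∈ I, |v i - p| < |v i - q|)
    (hJ : ∀ j ∉ I, |v j - q| < |v j - p|) : SeparatedBelow v I ((p + q) / 2) :=
  ⟨fun i hi => (abs_sub_lt_abs_sub_iff_lt_midpoint hpq).1 (hI i hi),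
    fun j hj => (abs_sub_lt_abs_sub_iff_midpoint_lt hpq).1 (hJ j hj)⟩

theorem EDPAllowed1D.exists_separatedBelow (h : EDPAllowed1D v I) :
    ∃ t, SeparatedBelow v I t ∨ SeparatedBelow v Iᶜ t := by
  obtain ⟨p, q, hI, hJ⟩ := h
  rcases lt_trichotomy p q with hpq | rfl | hqp
  · exact ⟨_, Or.inl (separatedBelow_midpoint hpq hI hJ)⟩
  · exact ⟨p, Or.inl ⟨fun i hi => absurd (hI i hi) (lt_irrefl _),
      fun j hj => absurd (hJ j hj) (lt_irrefl _)⟩⟩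
  · exact ⟨_, Or.inr (separatedBelow_midpoint hqp hJ fun i hi => hI i (not_not.1 hi))⟩

/-- A coalition is SOI-allowed on the real line iff it is separated from its complement
by a point `t`; in particular, the one-dimensional SOI-allowed coalitions are exactly
the one-dimensional EDP-allowed coalitions. -/
theorem soi_allowed_iff_separated (N : ℕ) (v : Fin N → ℝ) (I : Set (Fin N)) :
    (SOIAllowed1D v I ↔
      ∃ t : ℝ, ((∀ i ∈ I, v i < t) ∧ (∀ j ∉ I, v j > t)) ∨
        ((∀ i ∈ I, v i > t) ∧ (∀ j ∉ I, v j < t))) ∧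
    (SOIAllowed1D v I ↔ EDPAllowed1D v I) := by
  have soi_iff : SOIAllowed1D v I ↔ ∃ t, SeparatedBelow v I t ∨ SeparatedBelow v Iᶜ t :=
    ⟨SOIAllowed1D.exists_separatedBelow, fun ⟨_, h⟩ =>
      h.elim SeparatedBelow.soiAllowed1D fun h => h.soiAllowed1D.of_compl⟩
  have edp_iff : EDPAllowed1D v I ↔ ∃ t, SeparatedBelow v I t ∨ SeparatedBelow v Iᶜ t :=
    ⟨EDPAllowed1D.exists_separatedBelow, fun ⟨_, h⟩ =>
      h.elim SeparatedBelow.edpAllowed1D fun h => h.edpAllowed1D.of_compl⟩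
  refine ⟨?_, soi_iff.trans edp_iff.symm⟩
  rw [soi_iff]
  simp only [separatedBelow_compl_iff]
  rfl
end

section
/- Let d ≥ 1, let v : Fin N → ℝ^d be a family of voter ideal points, and let I be a subset of Fin N. Then I is EDP-allowed if and only if there exist a nonzero vector w ∈ ℝ^d and a constant c ∈ ℝ such that ⟪w, v i⟫ < c for all i ∈ I and ⟪w, v j⟫ > c for all j ∉ I; that is, the EDP-allowed coalitions are exactly the subsets of voters whose ideal points can be strictly separated from the remaining ideal points by a hyperplane in ℝ^d. -/
open RealInnerProductSpace

/-- A coalition `I` is **EDP-allowed**: there exist outcome points `p, q` in Euclidean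
space such that every voter in `I` is strictly closer to `p` and every voter outside
`I` is strictly closer to `q`. -/
def EDPAllowed {d N : ℕ} (v : Fin N → EuclideanSpace ℝ (Fin d)) (I : Set (Fin N)) : Prop :=
  ∃ p q : EuclideanSpace ℝ (Fin d),
    (∀ i ∈ I, dist (v i) p < dist (v i) q) ∧ (∀ j ∉ I, dist (v j) q < dist (v j) p)

/-!
A point `x` is strictly closer to `p` than to `q` exactly when it lies on the `p`-side of the
perpendicular bisector `{x : 2 ⟪q - p, x⟫ = ⟪q - p, q + p⟫}`. So closer-to-`p`/closer-to-`q`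
splits are hyperplane splits with normal `q - p`. Conversely, a hyperplane `⟪w, x⟫ = c` with
`w ≠ 0` is the perpendicular bisector of `m ∓ w / 2`, where `m = (c / ‖w‖²) • w` is its foot
from the origin.
-/

section

variable {E : Type*} [NormedAddCommGroup E] [InnerProductSpace ℝ E]

theorem dist_lt_dist_iff_two_mul_inner_lt (x p q : E) :
    dist x p < dist x q ↔ 2 * ⟪q - p, x⟫ < ⟪q - p, q + p⟫ := by
  have hsq : dist x q ^ 2 - dist x p ^ 2 = ⟪q - p, q + p⟫ - 2 * ⟪q - p, x⟫ := by
    simp only [dist_eq_norm, norm_sub_sq_real, inner_sub_left, inner_add_right,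
      real_inner_self_eq_norm_sq, real_inner_comm x, real_inner_comm p q, inner_sub_right]
    ring
  rw [← pow_lt_pow_iff_left₀ dist_nonneg dist_nonneg two_ne_zero]
  constructor <;> intro h <;> linarith

theorem dist_lt_dist_iff_inner_lt_two_mul (x p q : E) :
    dist x q < dist x p ↔ ⟪q - p, q + p⟫ < 2 * ⟪q - p, x⟫ := by
  rw [dist_lt_dist_iff_two_mul_inner_lt, ← neg_sub q p, add_comm p q, inner_neg_left,
    inner_neg_left]
  constructor <;> intro h <;> linarith

variable {ι : Type*} (v : ι → E) (I : Set ι)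

theorem exists_separating_hyperplane_of_closer [Nontrivial E] {p q : E}
    (hp : ∀ i ∈ I, dist (v i) p < dist (v i) q) (hq : ∀ j ∉ I, dist (v j) q < dist (v j) p) :
    ∃ w : E, w ≠ 0 ∧ ∃ c : ℝ, (∀ i ∈ I, ⟪w, v i⟫ < c) ∧ (∀ j ∉ I, ⟪w, v j⟫ > c) := by
  obtain rfl | hpq := eq_or_ne p q
  · have : IsEmpty ι := ⟨fun i => by
      by_cases hi : i ∈ I
      exacts [lt_irrefl _ (hp i hi), lt_irrefl _ (hq i hi)]⟩
    obtain ⟨w, hw⟩ := exists_ne (0 : E)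
    exact ⟨w, hw, 0, fun i => isEmptyElim i, fun j => isEmptyElim j⟩
  refine ⟨q - p, sub_ne_zero.mpr hpq.symm, ⟪q - p, q + p⟫ / 2, fun i hi => ?_, fun j hj => ?_⟩
  · have := (dist_lt_dist_iff_two_mul_inner_lt (v i) p q).mp (hp i hi)
    linarith
  · have := (dist_lt_dist_iff_inner_lt_two_mul (v j) p q).mp (hq j hj)
    linarith

theorem exists_closer_of_separating_hyperplane {w : E} (hw : w ≠ 0) {c : ℝ}
    (hI : ∀ i ∈ I, ⟪w, v i⟫ < c) (hIc : ∀ j ∉ I, ⟪w, v j⟫ > c) :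
    ∃ p q : E, (∀ i ∈ I, dist (v i) p < dist (v i) q) ∧ (∀ j ∉ I, dist (v j) q < dist (v j) p) := by
  set m : E := (c / ‖w‖ ^ 2) • w
  have hdiff : (m + (1 / 2 : ℝ) • w) - (m - (1 / 2 : ℝ) • w) = w := by module
  have hsum : ⟪w, (m + (1 / 2 : ℝ) • w) + (m - (1 / 2 : ℝ) • w)⟫ = 2 * c := by
    have hw2 : ‖w‖ ^ 2 ≠ 0 := pow_ne_zero 2 (norm_ne_zero_iff.mpr hw)
    rw [show (m + (1 / 2 : ℝ) • w) + (m - (1 / 2 : ℝ) • w) = (2 * (c / ‖w‖ ^ 2)) • w by module,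
      real_inner_smul_right, real_inner_self_eq_norm_sq]
    field_simp
  refine ⟨m - (1 / 2 : ℝ) • w, m + (1 / 2 : ℝ) • w, fun i hi => ?_, fun j hj => ?_⟩
  · rw [dist_lt_dist_iff_two_mul_inner_lt, hdiff, hsum]
    linarith [hI i hi]
  · rw [dist_lt_dist_iff_inner_lt_two_mul, hdiff, hsum]
    linarith [hIc j hj]

end

/-- A coalition is EDP-allowed iff its ideal points can be strictly separated from the
remaining ideal points by a hyperplane `{x : ⟪w, x⟫ = c}` in `ℝ^d`. -/
theorem edp_allowed_iff_hyperplane_separated (d N : ℕ) (hd : 1 ≤ d)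
    (v : Fin N → EuclideanSpace ℝ (Fin d)) (I : Set (Fin N)) :
    EDPAllowed v I ↔
      ∃ w : EuclideanSpace ℝ (Fin d), w ≠ 0 ∧ ∃ c : ℝ,
        (∀ i ∈ I, ⟪w, v i⟫ < c) ∧ (∀ j ∉ I, ⟪w, v j⟫ > c) := by
  have : Nonempty (Fin d) := ⟨⟨0, hd⟩⟩
  constructor
  · rintro ⟨p, q, hp, hq⟩
    exact exists_separating_hyperplane_of_closer v I hp hq
  · rintro ⟨w, hw, c, hI, hIc⟩
    exact exists_closer_of_separating_hyperplane v I hw hI hIc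
end

section
/- Let d ≥ 1, let v : Fin N → ℝ^d be a family of voter ideal points, and let I be a subset of Fin N. Then I is EDP-allowed if and only if I is SOI-allowed. -/
open scoped RealInnerProductSpace


/-- A coalition `I` is **SOI-allowed**: there exist outcome locations `p, q` and
strengths `r, s ≥ 0` such that each voter ideal point lies in exactly one of the closed
balls `B(p, r)` and `B(q, s)`, and `I` is exactly the set of voters in `B(p, r)`. -/
def SOIAllowed {d N : ℕ} (v : Fin N → EuclideanSpace ℝ (Fin d)) (I : Set (Fin N)) : Prop :=
  ∃ p q : EuclideanSpace ℝ (Fin d), ∃ r s : ℝ, 0 ≤ r ∧ 0 ≤ s ∧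
    (∀ i, Xor' (dist (v i) p ≤ r) (dist (v i) q ≤ s)) ∧
    I = {i | dist (v i) p ≤ r}

section helpers
variable {E : Type*} [NormedAddCommGroup E] [InnerProductSpace ℝ E]

lemma dist_lt_dist_iff' (x p q : E) :
    dist x p < dist x q ↔ 2 * ⟪x, q - p⟫ < ‖q‖ ^ 2 - ‖p‖ ^ 2 := by
  rw [dist_eq_norm, dist_eq_norm,
    ← pow_lt_pow_iff_left₀ (norm_nonneg _) (norm_nonneg _) two_ne_zero,
    norm_sub_sq_real, norm_sub_sq_real, inner_sub_right]
  constructor <;> intro h <;> nlinarith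

lemma dist_le_iff_sq' (x p : E) (t : ℝ) (ht : 0 ≤ t) :
    dist x p ≤ t ↔ dist x p ^ 2 ≤ t ^ 2 := by
  rw [← pow_le_pow_iff_left₀ dist_nonneg ht two_ne_zero]

lemma dist_sq_smul (u : E) (hu : ‖u‖ = 1) (x : E) (c t : ℝ) :
    dist x ((c + t) • u) ^ 2
      = ‖x - c • u‖ ^ 2 - 2 * t * (⟪x, u⟫ - c) + t ^ 2 := by
  have h1 : x - (c + t) • u = (x - c • u) - t • u := by
    rw [add_smul]; abel
  rw [dist_eq_norm, h1, norm_sub_sq_real, inner_smul_right, inner_sub_left,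
    inner_smul_left, real_inner_self_eq_norm_sq, hu, norm_smul]
  simp only [RCLike.ofReal_real_eq_id, id, hu, starRingEnd_apply, star_trivial,
    Real.norm_eq_abs, mul_one, sq_abs]
  ring

lemma key_iff (w : E) (hw : w ≠ 0) (c : ℝ) (x : E) :
    dist x ((c / ‖w‖ ^ 2 - 1) • w) < dist x ((c / ‖w‖ ^ 2 + 1) • w) ↔ ⟪x, w⟫ < c := by
  rw [dist_lt_dist_iff']
  have hw2 : (0:ℝ) < ‖w‖ ^ 2 := pow_pos (norm_pos_iff.mpr hw) 2
  have hc : c / ‖w‖ ^ 2 * ‖w‖ ^ 2 = c := div_mul_cancel₀ c hw2.ne'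
  have h1 : (c / ‖w‖ ^ 2 + 1) • w - (c / ‖w‖ ^ 2 - 1) • w = (2:ℝ) • w := by
    rw [← sub_smul]; ring_nf
  rw [h1, inner_smul_right, norm_smul, norm_smul, mul_pow, mul_pow,
    Real.norm_eq_abs, Real.norm_eq_abs, sq_abs, sq_abs]
  constructor <;> intro h <;> nlinarith

lemma key_iff2 (w : E) (hw : w ≠ 0) (c : ℝ) (x : E) :
    dist x ((c / ‖w‖ ^ 2 + 1) • w) < dist x ((c / ‖w‖ ^ 2 - 1) • w) ↔ c < ⟪x, w⟫ := by
  rw [dist_lt_dist_iff']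
  have hw2 : (0:ℝ) < ‖w‖ ^ 2 := pow_pos (norm_pos_iff.mpr hw) 2
  have hc : c / ‖w‖ ^ 2 * ‖w‖ ^ 2 = c := div_mul_cancel₀ c hw2.ne'
  have h1 : (c / ‖w‖ ^ 2 - 1) • w - (c / ‖w‖ ^ 2 + 1) • w = (-2:ℝ) • w := by
    rw [← sub_smul]; ring_nf
  rw [h1, inner_smul_right, norm_smul, norm_smul, mul_pow, mul_pow,
    Real.norm_eq_abs, Real.norm_eq_abs, sq_abs, sq_abs]
  constructor <;> intro h <;> nlinarith

end helpers

lemma far_point {d N : ℕ} (hd : 1 ≤ d) (v : Fin N → EuclideanSpace ℝ (Fin d)) :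
    ∃ q : EuclideanSpace ℝ (Fin d), ∀ i, dist (v i) 0 < dist (v i) q := by
  obtain ⟨D, hD⟩ := Finite.exists_le (fun i => ‖v i‖)
  set D' : ℝ := max D 0 with hD'
  set e : EuclideanSpace ℝ (Fin d) := EuclideanSpace.single (⟨0, hd⟩ : Fin d) (1:ℝ) with he
  have hne : ‖e‖ = 1 := by rw [he, EuclideanSpace.norm_single]; simp
  refine ⟨(2 * D' + 1) • e, fun i => ?_⟩
  have hDi : ‖v i‖ ≤ D' := le_trans (hD i) (le_max_left _ _)
  have hD0 : 0 ≤ D' := le_max_right _ _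
  have hq : ‖(2 * D' + 1) • e‖ = 2 * D' + 1 := by
    rw [norm_smul, hne, mul_one, Real.norm_eq_abs, abs_of_pos (by linarith)]
  have h2 : ‖(2 * D' + 1) • e‖ - ‖v i‖ ≤ ‖v i - (2 * D' + 1) • e‖ := by
    rw [norm_sub_rev]; exact norm_sub_norm_le _ _
  rw [dist_zero_right, dist_eq_norm]
  rw [hq] at h2
  linarith

lemma sep_to_edp {d N : ℕ} (v : Fin N → EuclideanSpace ℝ (Fin d)) (I : Set (Fin N))
    (w : EuclideanSpace ℝ (Fin d)) (hw : w ≠ 0) (c : ℝ)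
    (h1 : ∀ i ∈ I, ⟪v i, w⟫ < c) (h2 : ∀ j ∉ I, c < ⟪v j, w⟫) : EDPAllowed v I := by
  refine ⟨(c / ‖w‖ ^ 2 - 1) • w, (c / ‖w‖ ^ 2 + 1) • w, fun i hi => ?_, fun j hj => ?_⟩
  · exact (key_iff w hw c (v i)).2 (h1 i hi)
  · exact (key_iff2 w hw c (v j)).2 (h2 j hj)

lemma sep_to_soi {d N : ℕ} (v : Fin N → EuclideanSpace ℝ (Fin d)) (I : Set (Fin N))
    (w : EuclideanSpace ℝ (Fin d)) (hw : w ≠ 0) (c : ℝ)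
    (h1 : ∀ i ∈ I, ⟪v i, w⟫ < c) (h2 : ∀ j ∉ I, c < ⟪v j, w⟫) : SOIAllowed v I := by
  classical
  have hwn : (0:ℝ) < ‖w‖ := norm_pos_iff.mpr hw
  set u : EuclideanSpace ℝ (Fin d) := ‖w‖⁻¹ • w with hu'
  have hu : ‖u‖ = 1 := norm_smul_inv_norm hw
  set c' : ℝ := c / ‖w‖ with hc'
  set a : Fin N → ℝ := fun i => ⟪v i, u⟫ with ha
  have hai : ∀ i, a i = ⟪v i, w⟫ / ‖w‖ := by
    intro i; rw [ha]; simp only [hu', inner_smul_right]; rw [div_eq_inv_mul]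
  have hI1 : ∀ i ∈ I, a i < c' := by
    intro i hi; rw [hai, hc']
    exact (div_lt_div_iff_of_pos_right hwn).2 (h1 i hi)
  have hI2 : ∀ j ∉ I, c' < a j := by
    intro j hj; rw [hai, hc']
    exact (div_lt_div_iff_of_pos_right hwn).2 (h2 j hj)
  set m : Fin N → ℝ := fun i => |a i - c'| with hm'
  have hm : ∀ i, 0 < m i := by
    intro i
    by_cases hi : i ∈ I
    · exact abs_pos.2 (sub_ne_zero.2 (ne_of_lt (hI1 i hi)))
    · exact abs_pos.2 (sub_ne_zero.2 (ne_of_gt (hI2 i hi)))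
  obtain ⟨T, hT⟩ := Finite.exists_le (fun i => ‖v i - c' • u‖ ^ 2 / (2 * m i))
  set t : ℝ := max T 1 with ht'
  have ht0 : (0:ℝ) < t := lt_of_lt_of_le one_pos (le_max_right _ _)
  have hbound : ∀ i, ‖v i - c' • u‖ ^ 2 ≤ 2 * t * m i := by
    intro i
    have h3 := hT i
    rw [div_le_iff₀ (by have := hm i; positivity)] at h3
    have h4 : T ≤ t := le_max_left _ _
    nlinarith [hm i]
  have fact1 : ∀ i ∈ I, dist (v i) ((c' + -t) • u) ≤ t := by
    intro i hi
    rw [dist_le_iff_sq' _ _ t ht0.le, dist_sq_smul u hu _ c' (-t)]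
    have h3 := hbound i
    have h4 := hI1 i hi
    have h5 : m i = -(a i - c') := abs_of_neg (by linarith)
    rw [h5] at h3
    simp only [ha] at h3 ⊢
    nlinarith
  have fact2 : ∀ i ∈ I, ¬ dist (v i) ((c' + t) • u) ≤ t := by
    intro i hi hcon
    rw [dist_le_iff_sq' _ _ t ht0.le, dist_sq_smul u hu _ c' t] at hcon
    have h4 := hI1 i hi
    have h6 : (0:ℝ) ≤ ‖v i - c' • u‖ ^ 2 := sq_nonneg _
    simp only [ha] at h4
    nlinarith
  have fact3 : ∀ j ∉ I, dist (v j) ((c' + t) • u) ≤ t := by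
    intro j hj
    rw [dist_le_iff_sq' _ _ t ht0.le, dist_sq_smul u hu _ c' t]
    have h3 := hbound j
    have h4 := hI2 j hj
    have h5 : m j = a j - c' := abs_of_pos (by linarith)
    rw [h5] at h3
    simp only [ha] at h3 ⊢
    nlinarith
  have fact4 : ∀ j ∉ I, ¬ dist (v j) ((c' + -t) • u) ≤ t := by
    intro j hj hcon
    rw [dist_le_iff_sq' _ _ t ht0.le, dist_sq_smul u hu _ c' (-t)] at hcon
    have h4 := hI2 j hj
    have h6 : (0:ℝ) ≤ ‖v j - c' • u‖ ^ 2 := sq_nonneg _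
    simp only [ha] at h4
    nlinarith
  refine ⟨(c' + -t) • u, (c' + t) • u, t, t, ht0.le, ht0.le, fun i => ?_, ?_⟩
  · by_cases hi : i ∈ I
    · exact Or.inl ⟨fact1 i hi, fact2 i hi⟩
    · exact Or.inr ⟨fact3 i hi, fact4 i hi⟩
  · ext i
    simp only [Set.mem_setOf_eq]
    constructor
    · exact fact1 i
    · intro hdi
      by_contra hni
      exact fact4 i hni hdi

/-- In any dimension `d ≥ 1`, a coalition is EDP-allowed iff it is SOI-allowed. -/
theorem edp_allowed_iff_soi_allowed (d N : ℕ) (hd : 1 ≤ d)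
    (v : Fin N → EuclideanSpace ℝ (Fin d)) (I : Set (Fin N)) :
    EDPAllowed v I ↔ SOIAllowed v I := by
  constructor
  · rintro ⟨p, q, h1, h2⟩
    by_cases hw : q - p = 0
    · have hpq : p = q := (sub_eq_zero.mp hw).symm
      have hemp : IsEmpty (Fin N) := ⟨fun i => by
        by_cases hi : i ∈ I
        · exact absurd (h1 i hi) (by rw [hpq]; exact lt_irrefl _)
        · exact absurd (h2 i hi) (by rw [hpq]; exact lt_irrefl _)⟩
      refine ⟨0, 0, 0, 0, le_refl 0, le_refl 0, fun i => hemp.elim i, ?_⟩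
      exact (Set.eq_empty_of_isEmpty I).trans (Set.eq_empty_of_isEmpty _).symm
    · apply sep_to_soi v I (q - p) hw ((‖q‖ ^ 2 - ‖p‖ ^ 2) / 2)
      · intro i hi
        have := (dist_lt_dist_iff' (v i) p q).1 (h1 i hi)
        linarith
      · intro j hj
        have h3 := (dist_lt_dist_iff' (v j) q p).1 (h2 j hj)
        have h5 : ⟪v j, p - q⟫ = -⟪v j, q - p⟫ := by
          rw [← inner_neg_right]; congr 1; abel
        rw [h5] at h3
        linarith
  · rintro ⟨p, q, r, s, hr, hs, hxor, hI⟩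
    have fI : ∀ i ∈ I, dist (v i) p ≤ r ∧ ¬ dist (v i) q ≤ s := by
      intro i hi
      have hdp : dist (v i) p ≤ r := by rw [hI] at hi; exact hi
      rcases hxor i with ⟨h4, h5⟩ | ⟨h4, h5⟩
      · exact ⟨hdp, h5⟩
      · exact absurd hdp h5
    have fJ : ∀ j ∉ I, ¬ dist (v j) p ≤ r ∧ dist (v j) q ≤ s := by
      intro j hj
      have hdp : ¬ dist (v j) p ≤ r := by rw [hI] at hj; exact hj
      rcases hxor j with ⟨h4, h5⟩ | ⟨h4, h5⟩
      · exact absurd h4 hdp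
      · exact ⟨hdp, h4⟩
    set c : ℝ := (r ^ 2 - s ^ 2 - ‖p‖ ^ 2 + ‖q‖ ^ 2) / 2 with hc
    have g1 : ∀ i ∈ I, ⟪v i, q - p⟫ < c := by
      intro i hi
      obtain ⟨hdp, hdq⟩ := fI i hi
      push_neg at hdq
      have e1 : dist (v i) p ^ 2 ≤ r ^ 2 := (dist_le_iff_sq' _ _ r hr).1 hdp
      have e2 : s ^ 2 < dist (v i) q ^ 2 := by
        have := dist_nonneg (x := v i) (y := q)
        nlinarith
      rw [dist_eq_norm, norm_sub_sq_real] at e1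
      rw [dist_eq_norm, norm_sub_sq_real] at e2
      rw [inner_sub_right, hc]
      linarith
    have g2 : ∀ j ∉ I, c < ⟪v j, q - p⟫ := by
      intro j hj
      obtain ⟨hdp, hdq⟩ := fJ j hj
      push_neg at hdp
      have e1 : dist (v j) q ^ 2 ≤ s ^ 2 := (dist_le_iff_sq' _ _ s hs).1 hdq
      have e2 : r ^ 2 < dist (v j) p ^ 2 := by
        have := dist_nonneg (x := v j) (y := p)
        nlinarith
      rw [dist_eq_norm, norm_sub_sq_real] at e1
      rw [dist_eq_norm, norm_sub_sq_real] at e2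
      rw [inner_sub_right, hc]
      linarith
    by_cases hw : q - p = 0
    · by_cases hIall : ∀ i, i ∈ I
      · obtain ⟨qf, hqf⟩ := far_point hd v
        exact ⟨0, qf, fun i _ => hqf i, fun j hj => absurd (hIall j) hj⟩
      · push_neg at hIall
        obtain ⟨j0, hj0⟩ := hIall
        have hc0 : c < 0 := by
          have := g2 j0 hj0; rw [hw, inner_zero_right] at this; linarith
        have hInone : ∀ i, i ∉ I := by
          intro i hi
          have := g1 i hi; rw [hw, inner_zero_right] at this; linarith
        obtain ⟨qf, hqf⟩ := far_point hd v
        exact ⟨qf, 0, fun i hi => absurd hi (hInone i), fun j _ => hqf j⟩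
    · exact sep_to_edp v I (q - p) hw c g1 g2
end

section
/- For every dimension d ≥ 1 there exist a number of voters N, a family of voter ideal points v : Fin N → ℝ^d, and a subset I of Fin N such that I is TIOLI-allowed but I is not EDP-allowed. (For instance, take the three collinear points 0, e₁, 2e₁ and I the singleton consisting of the middle voter.) -/
/-- A coalition `I` is **TIOLI-allowed**: there exist a point `p` and a radius `r ≥ 0`
such that either `I` or its complement is exactly the set of voters whose ideal point
lies in the closed ball `B(p, r)`. -/
def TIOLIAllowed {d N : ℕ} (v : Fin N → EuclideanSpace ℝ (Fin d)) (I : Set (Fin N)) : Prop :=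
  ∃ p : EuclideanSpace ℝ (Fin d), ∃ r : ℝ, 0 ≤ r ∧
    (I = {i | dist (v i) p ≤ r} ∨ Iᶜ = {i | dist (v i) p ≤ r})

/-!
Whichever of two points `p, q` a voter prefers is decided by an open half-space, since
`dist x p < dist x q` is linear in `x` after squaring. Hence the voters preferring `q` form a
convex set, so a coalition containing a voter that lies between two non-members is never
EDP-allowed. On the line `0, e, 2e` the middle voter alone is, however, the ball of radius `0`
around `e`.
-/

theorem dist_lt_dist_iff_inner_lt {E : Type*} [NormedAddCommGroup E] [InnerProductSpace ℝ E]
    (x p q : E) :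
    dist x p < dist x q ↔ 2 * inner ℝ (q - p) x < ‖q‖ ^ 2 - ‖p‖ ^ 2 := by
  rw [← sq_lt_sq₀ dist_nonneg dist_nonneg, dist_eq_norm, dist_eq_norm, norm_sub_sq_real,
    norm_sub_sq_real, inner_sub_left, real_inner_comm p, real_inner_comm q]
  constructor <;> intro h <;> linarith

theorem convex_setOf_dist_lt_dist {E : Type*} [NormedAddCommGroup E] [InnerProductSpace ℝ E]
    (p q : E) : Convex ℝ {x : E | dist x p < dist x q} := by
  simp only [dist_lt_dist_iff_inner_lt]
  exact convex_halfSpace_lt ((2 : ℝ) • innerₛₗ ℝ (q - p)).isLinear _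

theorem not_edpAllowed_of_mem_segment {d N : ℕ} {v : Fin N → EuclideanSpace ℝ (Fin d)}
    {I : Set (Fin N)} {i j k : Fin N} (hi : i ∈ I) (hj : j ∉ I) (hk : k ∉ I)
    (hv : v i ∈ segment ℝ (v j) (v k)) : ¬ EDPAllowed v I := by
  rintro ⟨p, q, hI, hIc⟩
  have : dist (v i) q < dist (v i) p :=
    convex_setOf_dist_lt_dist q p |>.segment_subset (hIc j hj) (hIc k hk) hv
  exact (hI i hi).asymm this

theorem tioliAllowed_singleton {d N : ℕ} {v : Fin N → EuclideanSpace ℝ (Fin d)} {i : Fin N}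
    (hv : ∀ j, v j = v i → j = i) : TIOLIAllowed v {i} := by
  refine ⟨v i, 0, le_rfl, Or.inl ?_⟩
  ext j
  simp only [Set.mem_singleton_iff, Set.mem_ofPred_eq, dist_le_zero]
  exact ⟨fun h => h ▸ rfl, hv j⟩

/-- In every dimension `d ≥ 1` there is a configuration of voter ideal points and a
coalition that is TIOLI-allowed but not EDP-allowed. -/
theorem exists_tioli_allowed_not_edp_allowed (d : ℕ) (hd : 1 ≤ d) :
    ∃ (N : ℕ) (v : Fin N → EuclideanSpace ℝ (Fin d)) (I : Set (Fin N)),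
      TIOLIAllowed v I ∧ ¬ EDPAllowed v I := by
  obtain ⟨e, he⟩ : ∃ e : EuclideanSpace ℝ (Fin d), e ≠ 0 :=
    ⟨EuclideanSpace.single ⟨0, hd⟩ 1, by simp⟩
  refine ⟨3, ![0, e, (2 : ℝ) • e], {1}, tioliAllowed_singleton ?_,
    not_edpAllowed_of_mem_segment (j := 0) (k := 2) rfl (by decide) (by decide) ?_⟩
  · intro j hj
    fin_cases j <;> simp_all [two_smul]
  · exact ⟨1 / 2, 1 / 2, by norm_num, by norm_num, by norm_num, by simp [smul_smul]⟩
end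

section
/- Let A and B be finite subsets of E = ℝ^d that are strictly separated by a hyperplane, i.e., there exist a unit vector w and a constant c with ⟪w, a⟫ < c for all a ∈ A and ⟪w, b⟫ > c for all b ∈ B. Then there exist points p, q ∈ E and radii r, s ≥ 0 such that A is contained in the closed ball of radius r about p, B is contained in the closed ball of radius s about q, and the two closed balls are disjoint. -/
/-!
Push the separating hyperplane a positive distance `ε` away from `A`. A ball of huge radius `R`
tangent from below to the hyperplane `⟪w, x⟫ = c - ε / 2` contains every point of a bounded part
of the half-space `⟪w, x⟫ ≤ c - ε`, because on bounded regions the ball deviates from its tangent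
hyperplane only by `O(1 / R)`. The ball for `B` is the mirror image, tangent from above to a
hyperplane `⟪w, x⟫ = c + ε' / 2`; the two tangent hyperplanes are parallel and distinct, so the
balls are disjoint.
-/

open RealInnerProductSpace Filter Topology Metric

theorem Finset.exists_pos_forall_add_le {ι : Type*} (s : Finset ι) {f g : ι → ℝ}
    (h : ∀ i ∈ s, f i < g i) : ∃ ε > 0, ∀ i ∈ s, f i + ε ≤ g i := by
  have hsmall : ∀ᶠ ε in 𝓝[>] (0 : ℝ), ∀ i ∈ s, f i + ε ≤ g i :=
    (eventually_all_finset s).2 fun i hi =>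
      ((eventually_le_nhds (sub_pos.2 (h i hi))).filter_mono nhdsWithin_le_nhds).mono
        fun ε hε => by linarith
  obtain ⟨ε, hε, hpos⟩ := (hsmall.and self_mem_nhdsWithin).exists
  exact ⟨ε, hpos, hε⟩

section BallsTangentToHyperplane

variable {E : Type*} [NormedAddCommGroup E] [InnerProductSpace ℝ E] {w : E}

theorem norm_add_smul_le_of_inner_le (hw : ‖w‖ = 1) {y : E} {ε R : ℝ} (hε : 0 ≤ ε)
    (hεR : ε / 2 ≤ R) (hy : ⟪w, y⟫ ≤ -ε) (hyR : ‖y‖ ^ 2 ≤ R * ε) :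
    ‖y + R • w‖ ≤ R - ε / 2 := by
  have hR : 0 ≤ R := by linarith
  have hexpand : ‖y + R • w‖ ^ 2 = ‖y‖ ^ 2 + 2 * R * ⟪w, y⟫ + R ^ 2 := by
    rw [norm_add_sq_real, real_inner_smul_right, real_inner_comm, norm_smul, hw,
      Real.norm_of_nonneg hR]
    ring
  refine (pow_le_pow_iff_left₀ (norm_nonneg _) (by linarith) two_ne_zero).1 ?_
  rw [hexpand]
  nlinarith [mul_le_mul_of_nonneg_left hy hR]

theorem eventually_subset_closedBall_of_inner_add_le (hw : ‖w‖ = 1) {K : Set E}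
    (hK : Bornology.IsBounded K) {c ε : ℝ} (hε : 0 < ε) (hKw : ∀ x ∈ K, ⟪w, x⟫ + ε ≤ c) :
    ∀ᶠ R in atTop, K ⊆ closedBall (c • w - R • w) (R - ε / 2) := by
  obtain ⟨M, hM⟩ := isBounded_iff_forall_norm_le.1 hK
  filter_upwards [eventually_ge_atTop ((M + |c|) ^ 2 / ε), eventually_ge_atTop (ε / 2)]
    with R hRM hRε x hx
  have hxM : ‖x - c • w‖ ≤ M + |c| := by
    calc ‖x - c • w‖ ≤ ‖x‖ + ‖c • w‖ := norm_sub_le _ _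
      _ = ‖x‖ + |c| := by rw [norm_smul, hw, mul_one, Real.norm_eq_abs]
      _ ≤ M + |c| := by linarith [hM x hx]
  have hinner : ⟪w, x - c • w⟫ ≤ -ε := by
    rw [inner_sub_right, real_inner_smul_right, real_inner_self_eq_norm_sq, hw]
    linarith [hKw x hx]
  have hsq : ‖x - c • w‖ ^ 2 ≤ R * ε := by
    calc ‖x - c • w‖ ^ 2 ≤ (M + |c|) ^ 2 := pow_le_pow_left₀ (norm_nonneg _) hxM 2
      _ ≤ R * ε := (div_le_iff₀ hε).1 hRM
  rw [mem_closedBall, dist_eq_norm, sub_sub_eq_add_sub, add_sub_right_comm]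
  exact norm_add_smul_le_of_inner_le hw hε.le hRε hinner hsq

end BallsTangentToHyperplane

/-- If two finite sets `A` and `B` in Euclidean space are strictly separated by a
hyperplane (with unit normal `w` and offset `c`), then they can be enclosed in two
disjoint closed balls. -/
theorem separated_finsets_in_disjoint_balls (d : ℕ)
    (A B : Finset (EuclideanSpace ℝ (Fin d)))
    (w : EuclideanSpace ℝ (Fin d)) (hw : ‖w‖ = 1) (c : ℝ)
    (hA : ∀ a ∈ A, ⟪w, a⟫ < c) (hB : ∀ b ∈ B, ⟪w, b⟫ > c) :
    ∃ p q : EuclideanSpace ℝ (Fin d), ∃ r s : ℝ, 0 ≤ r ∧ 0 ≤ s ∧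
      ↑A ⊆ Metric.closedBall p r ∧ ↑B ⊆ Metric.closedBall q s ∧
      Disjoint (Metric.closedBall p r) (Metric.closedBall q s) := by
  obtain ⟨εA, hεA, hA'⟩ := A.exists_pos_forall_add_le hA
  obtain ⟨εB, hεB, hB'⟩ := B.exists_pos_forall_add_le hB
  have hB_neg : ∀ b ∈ (B : Set _), ⟪-w, b⟫ + εB ≤ -c := fun b hb => by
    rw [inner_neg_left]; linarith [hB' b hb]
  obtain ⟨R, hRA, hRB, hR⟩ :=
    ((eventually_subset_closedBall_of_inner_add_le hw A.finite_toSet.isBounded hεA hA').and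
      ((eventually_subset_closedBall_of_inner_add_le (by rwa [norm_neg])
        B.finite_toSet.isBounded hεB hB_neg).and
        (eventually_ge_atTop (max εA εB)))).exists
  refine ⟨_, _, _, _, by linarith [le_max_left εA εB], by linarith [le_max_right εA εB],
    hRA, hRB, closedBall_disjoint_closedBall ?_⟩
  have hdist : dist (c • w - R • w) ((-c) • -w - R • -w) = 2 * R := by
    rw [dist_eq_norm, show c • w - R • w - ((-c) • -w - R • -w) = (-(2 * R)) • w by module,
      norm_smul, hw, mul_one, norm_neg, Real.norm_of_nonneg (by linarith [le_max_left εA εB])]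
  linarith
end

section
/- Let S be a finite set of points in the Euclidean plane ℝ² with no three points of S collinear, and let A ⊆ S with A and S \ A both nonempty. Suppose A is strictly separable from S \ A by a line, i.e., there exist a nonzero vector w and a constant c with ⟪w, x⟫ < c for all x ∈ A and ⟪w, x⟫ > c for all x ∈ S \ A. Then there exist two distinct points a, b ∈ S, a nonzero vector w' and a constant c' such that ⟪w', a⟫ = c', ⟪w', b⟫ = c', ⟪w', x⟫ < c' for every x ∈ A \ {a, b}, and ⟪w', x⟫ > c' for every x ∈ (S \ A) \ {a, b}. -/
open RealInnerProductSpace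

private noncomputable def perp (u : EuclideanSpace ℝ (Fin 2)) : EuclideanSpace ℝ (Fin 2) :=
  (WithLp.equiv 2 (Fin 2 → ℝ)).symm ![-(u 1), u 0]

private lemma inner_expand (x y : EuclideanSpace ℝ (Fin 2)) :
    ⟪x, y⟫ = x 0 * y 0 + x 1 * y 1 := by
  simp [PiLp.inner_apply, Fin.sum_univ_two, RCLike.inner_apply, conj_trivial]; ring

private lemma ne_zero_iff' (u : EuclideanSpace ℝ (Fin 2)) : u ≠ 0 ↔ u 0 ≠ 0 ∨ u 1 ≠ 0 := by
  constructor
  · intro h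
    by_contra hc; push_neg at hc
    exact h (by ext i; fin_cases i <;> simp [hc.1, hc.2])
  · rintro (h | h) hc <;> simp [hc] at h

private lemma perp_ne_zero {u : EuclideanSpace ℝ (Fin 2)} (hu : u ≠ 0) : perp u ≠ 0 := by
  rw [ne_zero_iff'] at hu ⊢
  rcases hu with h | h
  · exact Or.inr h
  · exact Or.inl (by show -(u 1) ≠ 0; simpa using h)

private lemma inner_perp (u : EuclideanSpace ℝ (Fin 2)) : ⟪perp u, u⟫ = 0 := by
  rw [inner_expand]
  show -(u 1) * u 0 + u 0 * u 1 = 0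
  ring

private lemma mem_span_perp {u z : EuclideanSpace ℝ (Fin 2)} (hu : u ≠ 0)
    (hz : ⟪u, z⟫ = 0) : ∃ r : ℝ, z = r • perp u := by
  rw [inner_expand] at hz
  rcases (ne_zero_iff' u).mp hu with h | h
  · refine ⟨z 1 / u 0, ?_⟩
    ext i
    fin_cases i <;> simp [perp, PiLp.smul_apply] <;> field_simp <;> linarith
  · refine ⟨-(z 0) / u 1, ?_⟩
    ext i
    fin_cases i <;> simp [perp, PiLp.smul_apply] <;> field_simp <;> linarith

private lemma collinear_of_inner {u a x y : EuclideanSpace ℝ (Fin 2)} (hu : u ≠ 0)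
    (hx : ⟪u, x - a⟫ = 0) (hy : ⟪u, y - a⟫ = 0) :
    Collinear ℝ ({a, x, y} : Set (EuclideanSpace ℝ (Fin 2))) := by
  rw [collinear_iff_of_mem (Set.mem_insert a {x, y})]
  refine ⟨perp u, ?_⟩
  rintro p (rfl | rfl | rfl)
  · exact ⟨0, by simp⟩
  · obtain ⟨r, hr⟩ := mem_span_perp hu hx
    exact ⟨r, by rw [← hr]; simp [vadd_eq_add]⟩
  · obtain ⟨r, hr⟩ := mem_span_perp hu hy
    exact ⟨r, by rw [← hr]; simp [vadd_eq_add]⟩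

private lemma rotate (S : Finset (EuclideanSpace ℝ (Fin 2)))
    (hgen : ∀ a ∈ S, ∀ b ∈ S, ∀ c ∈ S, a ≠ b → a ≠ c → b ≠ c →
      ¬ Collinear ℝ ({a, b, c} : Set (EuclideanSpace ℝ (Fin 2))))
    (A : Finset (EuclideanSpace ℝ (Fin 2))) (hAS : A ⊆ S)
    (w v : EuclideanSpace ℝ (Fin 2)) (hw : w ≠ 0) (hvw : ⟪v, w⟫ = 0)
    (a : EuclideanSpace ℝ (Fin 2)) (haA : a ∈ A)
    (hmax : ∀ x ∈ A, x ≠ a → ⟪w, x - a⟫ < 0)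
    (hout : ∀ x ∈ S, x ∉ A → 0 < ⟪w, x - a⟫)
    (hT : ∃ x ∈ S, ⟪w, x - a⟫ * ⟪v, x - a⟫ < 0) :
    ∃ a ∈ S, ∃ b ∈ S, a ≠ b ∧
      ∃ w' : EuclideanSpace ℝ (Fin 2), w' ≠ 0 ∧ ∃ c' : ℝ,
        ⟪w', a⟫ = c' ∧ ⟪w', b⟫ = c' ∧
        (∀ x ∈ A, x ≠ a → x ≠ b → ⟪w', x⟫ < c') ∧
        (∀ x ∈ S, x ∉ A → x ≠ a → x ≠ b → ⟪w', x⟫ > c') := by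
  classical
  set T := S.filter (fun x => ⟪w, x - a⟫ * ⟪v, x - a⟫ < 0) with hTdef
  obtain ⟨x₀, hx₀S, hx₀⟩ := hT
  have hTne : T.Nonempty := ⟨x₀, Finset.mem_filter.2 ⟨hx₀S, hx₀⟩⟩
  obtain ⟨b, hbT, hbmin⟩ :=
    T.exists_min_image (fun x => -⟪w, x - a⟫ / ⟪v, x - a⟫) hTne
  have hbS : b ∈ S := (Finset.mem_filter.1 hbT).1
  have hprod : ⟪w, b - a⟫ * ⟪v, b - a⟫ < 0 := (Finset.mem_filter.1 hbT).2
  have hdb : ⟪v, b - a⟫ ≠ 0 := by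
    intro h; rw [h, mul_zero] at hprod; exact lt_irrefl _ hprod
  set t : ℝ := -⟪w, b - a⟫ / ⟪v, b - a⟫ with htdef
  have ht : 0 < t := by
    rcases mul_neg_iff.mp hprod with ⟨h1, h2⟩ | ⟨h1, h2⟩
    · exact div_pos_of_neg_of_neg (by linarith) h2
    · exact div_pos (by linarith) h2
  set w' : EuclideanSpace ℝ (Fin 2) := w + t • v with hw'def
  have expand : ∀ x : EuclideanSpace ℝ (Fin 2), ⟪w', x⟫ = ⟪w, x⟫ + t * ⟪v, x⟫ := by
    intro x; rw [hw'def, inner_add_left, real_inner_smul_left]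
  have hw' : w' ≠ 0 := by
    intro h
    have h2 : ⟪w', w⟫ = 0 := by rw [h, inner_zero_left]
    rw [expand, hvw, mul_zero, add_zero] at h2
    exact hw (inner_self_eq_zero.mp h2)
  have hb0 : ⟪w', b - a⟫ = 0 := by
    rw [expand, htdef, div_mul_cancel₀ _ hdb]; ring
  have hab : a ≠ b := by
    rintro rfl; simp at hprod
  have hne0 : ∀ x ∈ S, x ≠ a → x ≠ b → ⟪w', x - a⟫ ≠ 0 := by
    intro x hxS hxa hxb h
    exact hgen a (hAS haA) x hxS b hbS (Ne.symm hxa) hab hxb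
      (collinear_of_inner hw' h hb0)
  refine ⟨a, hAS haA, b, hbS, hab, w', hw', ⟪w', a⟫, rfl, ?_, ?_, ?_⟩
  · have := hb0; rw [inner_sub_right] at this; linarith
  · intro x hxA hxa hxb
    have gx : ⟪w, x - a⟫ < 0 := hmax x hxA hxa
    have hle : ⟪w', x - a⟫ ≤ 0 := by
      rcases le_or_gt ⟪v, x - a⟫ 0 with h | h
      · rw [expand]; nlinarith
      · have hxT : x ∈ T := Finset.mem_filter.2 ⟨hAS hxA, mul_neg_of_neg_of_pos gx h⟩
        have hmin := hbmin x hxT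
        have : t * ⟪v, x - a⟫ ≤ -⟪w, x - a⟫ := by
          rw [← div_mul_cancel₀ (-⟪w, x - a⟫) (ne_of_gt h)]
          exact mul_le_mul_of_nonneg_right hmin (le_of_lt h)
        rw [expand]; linarith
    have := lt_of_le_of_ne hle (hne0 x (hAS hxA) hxa hxb)
    rw [inner_sub_right] at this; linarith
  · intro x hxS hxA hxa hxb
    have gx : 0 < ⟪w, x - a⟫ := hout x hxS hxA
    have hle : 0 ≤ ⟪w', x - a⟫ := by
      rcases le_or_gt 0 ⟪v, x - a⟫ with h | h
      · rw [expand]; nlinarith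
      · have hxT : x ∈ T := Finset.mem_filter.2 ⟨hxS, mul_neg_of_pos_of_neg gx h⟩
        have hmin := hbmin x hxT
        have : -⟪w, x - a⟫ ≤ t * ⟪v, x - a⟫ := by
          rw [← div_mul_cancel₀ (-⟪w, x - a⟫) (ne_of_lt h)]
          exact mul_le_mul_of_nonpos_right hmin (le_of_lt h)
        rw [expand]; linarith
    have := (lt_of_le_of_ne hle (Ne.symm (hne0 x hxS hxa hxb)))
    rw [inner_sub_right] at this; linarith

/-- If a finite set `S` of points in the plane has no three points collinear and a
subset `A ⊆ S` (with `A` and `S \ A` both nonempty) is strictly separated from `S \ A`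
by a line, then there is a line through exactly two points `a, b` of `S` that keeps all
remaining points of `A` strictly on one side and all remaining points of `S \ A`
strictly on the other side. -/
theorem separating_line_through_two_points
    (S : Finset (EuclideanSpace ℝ (Fin 2)))
    (hgen : ∀ a ∈ S, ∀ b ∈ S, ∀ c ∈ S, a ≠ b → a ≠ c → b ≠ c →
      ¬ Collinear ℝ ({a, b, c} : Set (EuclideanSpace ℝ (Fin 2))))
    (A : Finset (EuclideanSpace ℝ (Fin 2))) (hAS : A ⊆ S)
    (hA : A.Nonempty) (hSA : ∃ x ∈ S, x ∉ A)
    (w : EuclideanSpace ℝ (Fin 2)) (hw : w ≠ 0) (c : ℝ)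
    (hsep₁ : ∀ x ∈ A, ⟪w, x⟫ < c) (hsep₂ : ∀ x ∈ S, x ∉ A → ⟪w, x⟫ > c) :
    ∃ a ∈ S, ∃ b ∈ S, a ≠ b ∧
      ∃ w' : EuclideanSpace ℝ (Fin 2), w' ≠ 0 ∧ ∃ c' : ℝ,
        ⟪w', a⟫ = c' ∧ ⟪w', b⟫ = c' ∧
        (∀ x ∈ A, x ≠ a → x ≠ b → ⟪w', x⟫ < c') ∧
        (∀ x ∈ S, x ∉ A → x ≠ a → x ≠ b → ⟪w', x⟫ > c') := by
  classical
  obtain ⟨a, haA, hamax⟩ := A.exists_max_image (fun x => ⟪w, x⟫) hA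
  have hac : ⟪w, a⟫ < c := hsep₁ a haA
  by_cases hcase : ∃ b ∈ A, b ≠ a ∧ ⟪w, b⟫ = ⟪w, a⟫
  · obtain ⟨b, hbA, hba, hbw⟩ := hcase
    have hb0 : ⟪w, b - a⟫ = 0 := by rw [inner_sub_right]; linarith
    refine ⟨a, hAS haA, b, hAS hbA, Ne.symm hba, w, hw, ⟪w, a⟫, rfl, hbw, ?_, ?_⟩
    · intro x hxA hxa hxb
      have hle : ⟪w, x⟫ ≤ ⟪w, a⟫ := hamax x hxA
      rcases lt_or_eq_of_le hle with h | h
      · exact h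
      · exfalso
        have hx0 : ⟪w, x - a⟫ = 0 := by rw [inner_sub_right]; linarith
        exact hgen a (hAS haA) x (hAS hxA) b (hAS hbA) (Ne.symm hxa) (Ne.symm hba)
          hxb (collinear_of_inner hw hx0 hb0)
    · intro x hxS hxA _ _
      have := hsep₂ x hxS hxA
      linarith
  · push_neg at hcase
    have hmax : ∀ x ∈ A, x ≠ a → ⟪w, x - a⟫ < 0 := by
      intro x hxA hxa
      rw [inner_sub_right, sub_neg]
      exact lt_of_le_of_ne (hamax x hxA) (hcase x hxA hxa)
    have hout : ∀ x ∈ S, x ∉ A → 0 < ⟪w, x - a⟫ := by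
      intro x hxS hxA
      have := hsep₂ x hxS hxA
      rw [inner_sub_right]; linarith
    set v := perp w with hvdef
    have hv : v ≠ 0 := perp_ne_zero hw
    have hvw : ⟪v, w⟫ = 0 := inner_perp w
    by_cases h1 : ∃ x ∈ S, ⟪w, x - a⟫ * ⟪v, x - a⟫ < 0
    · exact rotate S hgen A hAS w v hw hvw a haA hmax hout h1
    · by_cases h2 : ∃ x ∈ S, ⟪w, x - a⟫ * ⟪-v, x - a⟫ < 0
      · exact rotate S hgen A hAS w (-v) hw (by rw [inner_neg_left, hvw, neg_zero])
          a haA hmax hout h2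
      · push_neg at h1 h2
        have hall : ∀ x ∈ S, x ≠ a → ⟪v, x - a⟫ = 0 := by
          intro x hxS hxa
          have hwx : ⟪w, x - a⟫ ≠ 0 := by
            by_cases hxA : x ∈ A
            · exact ne_of_lt (hmax x hxA hxa)
            · exact ne_of_gt (hout x hxS hxA)
          have p1 := h1 x hxS
          have p2 := h2 x hxS
          rw [inner_neg_left] at p2
          rcases lt_trichotomy (⟪w, x - a⟫) 0 with h | h | h
          · nlinarith
          · exact absurd h hwx
          · nlinarith
        obtain ⟨b, hbS, hbA⟩ := hSA
        have hba : b ≠ a := by rintro rfl; exact hbA haA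
        have hvb : ⟪v, b - a⟫ = 0 := hall b hbS hba
        refine ⟨a, hAS haA, b, hbS, Ne.symm hba, v, hv, ⟪v, a⟫, rfl, ?_, ?_, ?_⟩
        · rw [inner_sub_right] at hvb; linarith
        · intro x hxA hxa hxb
          exact absurd (collinear_of_inner hv (hall x (hAS hxA) hxa) hvb)
            (hgen a (hAS haA) x (hAS hxA) b hbS (Ne.symm hxa) (Ne.symm hba) hxb)
        · intro x hxS hxA hxa hxb
          exact absurd (collinear_of_inner hv (hall x hxS hxa) hvb)
            (hgen a (hAS haA) x hxS b hbS (Ne.symm hxa) (Ne.symm hba) hxb)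
end

section
/- Let S be a finite set of points in the Euclidean plane ℝ², let w be a nonzero vector and c a constant, and suppose a, b ∈ S are distinct points with {x ∈ S : ⟪w, x⟫ = c} = {a, b}. Let T = {x ∈ S : ⟪w, x⟫ < c}. Then each of the four sets T, T ∪ {a}, T ∪ {b}, and T ∪ {a, b} is strictly linearly separable from its complement in S, i.e., for each such set U there exist a nonzero vector w' and a constant c' with ⟪w', x⟫ < c' for all x ∈ U and ⟪w', x⟫ > c' for all x ∈ S \ U. -/
open RealInnerProductSpace Filter Topology

/-!
Points strictly below the line, or on or below it, are cut off by the line itself. For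
`T ∪ {a}`, tilt the normal to `w + ε (b - a)` with `ε > 0` small: for small `ε` every strict
comparison of `⟪w, ·⟫` on the finite set `S` survives, and the one tie that matters, `a`
against `b`, is broken in favour of `a` since `⟪b - a, b⟫ - ⟪b - a, a⟫ = ‖b - a‖² > 0`.
-/

theorem eventually_add_mul_lt_of_lex_lt {α : Type*} (S : Finset α) (g h : α → ℝ) :
    ∀ᶠ ε in 𝓝[>] (0 : ℝ), ∀ x ∈ S, ∀ y ∈ S, (g x < g y ∨ g x = g y ∧ h x < h y) →
      g x + ε * h x < g y + ε * h y := by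
  simp only [eventually_all_finset, eventually_imp_distrib_left]
  rintro x - y - (hg | ⟨hg, hh⟩)
  · have hlim : ∀ z, Tendsto (fun ε : ℝ ↦ g z + ε * h z) (𝓝[>] 0) (𝓝 (g z)) := fun z ↦
      ((continuous_const.add (continuous_id.mul continuous_const)).tendsto' 0 (g z)
        (by simp)).mono_left nhdsWithin_le_nhds
    exact (hlim x).eventually_lt (hlim y) hg
  · filter_upwards [self_mem_nhdsWithin] with ε (hε : 0 < ε)
    rw [hg]
    gcongr

section

variable {E : Type*} [NormedAddCommGroup E] [InnerProductSpace ℝ E]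

def IsStrictlySeparable (S : Finset E) (U : Set E) : Prop :=
  ∃ w' : E, w' ≠ 0 ∧ ∃ c' : ℝ,
    (∀ x ∈ S, x ∈ U → ⟪w', x⟫ < c') ∧ (∀ x ∈ S, x ∉ U → ⟪w', x⟫ > c')

theorem isStrictlySeparable_of_forall_inner_lt {S : Finset E} {U : Set E} {w' : E}
    (hw' : w' ≠ 0) (h : ∀ x ∈ S, x ∈ U → ∀ y ∈ S, y ∉ U → ⟪w', x⟫ < ⟪w', y⟫) :
    IsStrictlySeparable S U := by
  have hfin : ∀ V : Set E, ((⟪w', ·⟫) '' {x | x ∈ S ∧ x ∈ V}).Finite := fun _ ↦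
    (S.finite_toSet.subset fun _ hx ↦ hx.1).image _
  obtain ⟨c', hlt, hgt⟩ := (hfin U).exists_between' (hfin Uᶜ) (by
    simpa only [Set.forall_mem_image, Set.mem_ofPred_eq, Set.mem_compl_iff, and_imp] using h)
  simp only [Set.forall_mem_image, Set.mem_ofPred_eq, Set.mem_compl_iff, and_imp] at hlt hgt
  exact ⟨w', hw', c', hlt, hgt⟩

theorem isStrictlySeparable_of_forall_lex_lt {S : Finset E} {U : Set E} {w : E} (hw : w ≠ 0)
    (v : E) (h : ∀ x ∈ S, x ∈ U → ∀ y ∈ S, y ∉ U →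
      ⟪w, x⟫ < ⟪w, y⟫ ∨ ⟪w, x⟫ = ⟪w, y⟫ ∧ ⟪v, x⟫ < ⟪v, y⟫) :
    IsStrictlySeparable S U := by
  have hne : ∀ᶠ ε in 𝓝[>] (0 : ℝ), w + ε • v ≠ 0 := by
    have hlim : Tendsto (fun ε : ℝ ↦ w + ε • v) (𝓝 0) (𝓝 w) :=
      (continuous_const.add (continuous_id.smul continuous_const)).tendsto' 0 w (by simp)
    exact (hlim.eventually_ne hw).filter_mono nhdsWithin_le_nhds
  obtain ⟨ε, hlex, hε⟩ :=
    ((eventually_add_mul_lt_of_lex_lt S (⟪w, ·⟫) (⟪v, ·⟫)).and hne).exists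
  refine isStrictlySeparable_of_forall_inner_lt hε fun x hx hxU y hy hyU ↦ ?_
  simpa only [inner_add_left, real_inner_smul_left] using hlex x hx y hy (h x hx hxU y hy hyU)

variable {S : Finset E} {w : E} {c : ℝ} {a b : E}

theorem isStrictlySeparable_inner_lt (hw : w ≠ 0) :
    IsStrictlySeparable S {x | x ∈ S ∧ ⟪w, x⟫ < c} :=
  isStrictlySeparable_of_forall_inner_lt hw fun _ _ hx _ hy hyU ↦
    hx.2.trans_le (not_lt.1 fun h ↦ hyU ⟨hy, h⟩)

theorem inner_eq_iff_of_setOf_inner_eq (hline : {x | x ∈ S ∧ ⟪w, x⟫ = c} = {a, b}) {x : E}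
    (hx : x ∈ S) : ⟪w, x⟫ = c ↔ x = a ∨ x = b := by
  simpa [hx] using Set.ext_iff.1 hline x

theorem isStrictlySeparable_inner_lt_union_pair (hw : w ≠ 0)
    (hline : {x | x ∈ S ∧ ⟪w, x⟫ = c} = {a, b}) :
    IsStrictlySeparable S ({x | x ∈ S ∧ ⟪w, x⟫ < c} ∪ {a, b}) := by
  refine isStrictlySeparable_of_forall_inner_lt hw fun x hx hxU y hy hyU ↦ ?_
  have hxc : ⟪w, x⟫ ≤ c := hxU.elim (fun hx ↦ hx.2.le) fun hx_ab ↦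
    ((inner_eq_iff_of_setOf_inner_eq hline hx).2 hx_ab).le
  have hcy : c < ⟪w, y⟫ := lt_of_not_ge fun hyc ↦ hyU <| hyc.lt_or_eq.imp (⟨hy, ·⟩)
    (inner_eq_iff_of_setOf_inner_eq hline hy).1
  exact hxc.trans_lt hcy

theorem isStrictlySeparable_inner_lt_union_singleton (hw : w ≠ 0) (hab : a ≠ b)
    (hline : {x | x ∈ S ∧ ⟪w, x⟫ = c} = {a, b}) :
    IsStrictlySeparable S ({x | x ∈ S ∧ ⟪w, x⟫ < c} ∪ {a}) := by
  refine isStrictlySeparable_of_forall_lex_lt hw (b - a) fun x hx hxU y hy hyU ↦ ?_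
  have hcy : c ≤ ⟪w, y⟫ := not_lt.1 fun h ↦ hyU (Or.inl ⟨hy, h⟩)
  rcases hxU with hxc | rfl
  · exact Or.inl (hxc.2.trans_le hcy)
  have hxc : ⟪w, x⟫ = c := (inner_eq_iff_of_setOf_inner_eq hline hx).2 (Or.inl rfl)
  rcases hcy.lt_or_eq with hcy | hcy
  · exact Or.inl (hxc ▸ hcy)
  obtain rfl : y = b :=
    ((inner_eq_iff_of_setOf_inner_eq hline hy).1 hcy.symm).resolve_left fun h ↦ hyU (Or.inr h)
  refine Or.inr ⟨hxc.trans hcy, sub_pos.1 ?_⟩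
  rw [← inner_sub_right]
  exact real_inner_self_pos.2 (sub_ne_zero.2 hab.symm)

end

theorem line_through_two_points_gives_separable_coalitions_general
    (S : Finset (EuclideanSpace ℝ (Fin 2)))
    (w : EuclideanSpace ℝ (Fin 2)) (hw : w ≠ 0) (c : ℝ)
    (a b : EuclideanSpace ℝ (Fin 2)) (hab : a ≠ b)
    (hline : {x : EuclideanSpace ℝ (Fin 2) | x ∈ S ∧ ⟪w, x⟫ = c} = {a, b})
    (T : Set (EuclideanSpace ℝ (Fin 2)))
    (hT : T = {x : EuclideanSpace ℝ (Fin 2) | x ∈ S ∧ ⟪w, x⟫ < c}) :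
    ∀ U ∈ ({T, T ∪ {a}, T ∪ {b}, T ∪ {a, b}} :
        Set (Set (EuclideanSpace ℝ (Fin 2)))),
      ∃ w' : EuclideanSpace ℝ (Fin 2), w' ≠ 0 ∧ ∃ c' : ℝ,
        (∀ x ∈ S, x ∈ U → ⟪w', x⟫ < c') ∧
        (∀ x ∈ S, x ∉ U → ⟪w', x⟫ > c') := by
  subst hT
  intro U hU
  simp only [Set.mem_insert_iff, Set.mem_singleton_iff] at hU
  rcases hU with rfl | rfl | rfl | rfl
  · exact isStrictlySeparable_inner_lt hw
  · exact isStrictlySeparable_inner_lt_union_singleton hw hab hline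
  · exact isStrictlySeparable_inner_lt_union_singleton hw hab.symm (by rw [hline, Set.pair_comm])
  · exact isStrictlySeparable_inner_lt_union_pair hw hline

/-- Given a finite set `S` of points in the plane and a line `{x : ⟪w, x⟫ = c}` that
passes through exactly two points `a, b` of `S`, let `T` be the set of points of `S`
strictly on the negative side of the line. Then each of the four sets `T`, `T ∪ {a}`,
`T ∪ {b}`, `T ∪ {a, b}` is strictly linearly separable from its complement in `S`. -/
theorem line_through_two_points_gives_separable_coalitions
    (S : Finset (EuclideanSpace ℝ (Fin 2)))
    (w : EuclideanSpace ℝ (Fin 2)) (hw : w ≠ 0) (c : ℝ)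
    (a b : EuclideanSpace ℝ (Fin 2)) (ha : a ∈ S) (hb : b ∈ S) (hab : a ≠ b)
    (hline : {x : EuclideanSpace ℝ (Fin 2) | x ∈ S ∧ ⟪w, x⟫ = c} = {a, b})
    (T : Set (EuclideanSpace ℝ (Fin 2)))
    (hT : T = {x : EuclideanSpace ℝ (Fin 2) | x ∈ S ∧ ⟪w, x⟫ < c}) :
    ∀ U ∈ ({T, T ∪ {a}, T ∪ {b}, T ∪ {a, b}} :
        Set (Set (EuclideanSpace ℝ (Fin 2)))),
      ∃ w' : EuclideanSpace ℝ (Fin 2), w' ≠ 0 ∧ ∃ c' : ℝ,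
        (∀ x ∈ S, x ∈ U → ⟪w', x⟫ < c') ∧
        (∀ x ∈ S, x ∉ U → ⟪w', x⟫ > c') :=
  line_through_two_points_gives_separable_coalitions_general S w hw c a b hab hline T hT
end

section
/- Let d ≥ 1, let v : Fin N → ℝ^d be a family of voter ideal points, and let I be a nonempty subset of Fin N. Then there exist a point p ∈ ℝ^d and a radius r ≥ 0 with I = {i : dist(v i, p) ≤ r} if and only if there exists a point p ∈ ℝ^d such that dist(v i, p) < dist(v j, p) for every i ∈ I and every j ∉ I; that is, I arises as the set of voters inside a TIOLI outcome sphere if and only if I is the set of |I| nearest voter ideal points to some point of ℝ^d (a nonempty cell of the |I|-th order Voronoi diagram of the ideal points). -/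
theorem exists_eq_setOf_le_iff_forall_lt {ι α : Type*} [Finite ι] [LinearOrder α] {f : ι → α}
    {I : Set ι} (hI : I.Nonempty) :
    (∃ r, I = {i | f i ≤ r}) ↔ ∀ i ∈ I, ∀ j ∉ I, f i < f j := by
  constructor
  · rintro ⟨r, rfl⟩ i hi j hj
    exact lt_of_le_of_lt hi (not_le.mp hj)
  · intro hsep
    obtain ⟨i₀, hi₀, hmax⟩ := Set.exists_max_image I f I.toFinite hI
    refine ⟨f i₀, Set.ext fun j => ⟨fun hj => hmax j hj, fun hj => ?_⟩⟩
    by_contra hjI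
    exact (hsep i₀ hi₀ j hjI).not_ge hj

theorem exists_nonneg_eq_setOf_dist_le_iff {ι X : Type*} [Finite ι] [PseudoMetricSpace X]
    (v : ι → X) (p : X) {I : Set ι} (hI : I.Nonempty) :
    (∃ r : ℝ, 0 ≤ r ∧ I = {i | dist (v i) p ≤ r}) ↔
      ∀ i ∈ I, ∀ j ∉ I, dist (v i) p < dist (v j) p := by
  rw [← exists_eq_setOf_le_iff_forall_lt hI]
  refine ⟨fun ⟨r, _, hr⟩ => ⟨r, hr⟩, fun ⟨r, hr⟩ => ⟨r, ?_, hr⟩⟩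
  obtain ⟨i, hi⟩ := hI
  rw [hr] at hi
  exact dist_nonneg.trans hi

theorem tioli_inside_coalition_iff_voronoi_cell_general (d N : ℕ)
    (v : Fin N → EuclideanSpace ℝ (Fin d)) (I : Set (Fin N)) (hI : I.Nonempty) :
    (∃ p : EuclideanSpace ℝ (Fin d), ∃ r : ℝ, 0 ≤ r ∧ I = {i | dist (v i) p ≤ r}) ↔
      (∃ p : EuclideanSpace ℝ (Fin d),
        ∀ i ∈ I, ∀ j ∉ I, dist (v i) p < dist (v j) p) :=
  exists_congr fun p => exists_nonneg_eq_setOf_dist_le_iff v p hI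

/-- A nonempty coalition `I` arises as the set of voters inside a TIOLI outcome sphere
(i.e. some closed ball contains exactly the ideal points of the voters in `I`) iff
there is a point of `ℝ^d` whose `|I|` nearest voter ideal points are exactly those of
`I` — that is, iff `I` corresponds to a nonempty cell of the `|I|`-th order Voronoi
diagram of the ideal points. -/
theorem tioli_inside_coalition_iff_voronoi_cell (d N : ℕ) (hd : 1 ≤ d)
    (v : Fin N → EuclideanSpace ℝ (Fin d)) (I : Set (Fin N)) (hI : I.Nonempty) :
    (∃ p : EuclideanSpace ℝ (Fin d), ∃ r : ℝ, 0 ≤ r ∧ I = {i | dist (v i) p ≤ r}) ↔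
      (∃ p : EuclideanSpace ℝ (Fin d),
        ∀ i ∈ I, ∀ j ∉ I, dist (v i) p < dist (v j) p) :=
  tioli_inside_coalition_iff_voronoi_cell_general d N v I hI
end
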